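/- arXiv:1711.05188 — 4 statements merged into one kernel-verified Lean document; each statement's English description precedes it below -/
import Mathlib

section
/- Let p ≥ 2 be an integer and (b_j)_{j≥1} a sequence of real numbers with Σ_{j≥1} b_j² < ∞, and let W be the limit in L²(Ω;H) of the partial sums Σ_{j=1}^n b_j ξ_j e_j. Then E[‖W‖^p] ≤ μ_p (Σ_{j≥1} b_j²)^{p/2}. -/
noncomputable section
open MeasureTheory ProbabilityTheory Real Filter
open scoped InnerProductSpace RealInnerProductSpace NNReal

variable {H : Type*} [NormedAddCommGroup H] [InnerProductSpace ℝ H]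

/-- The fractional power operator `L^{-β}`, defined spectrally via the
orthonormal eigenbasis `e` and eigenvalues `lam`. -/
def fracPow (lam : ℕ → ℝ) (β : ℝ) (e : ℕ → H) (x : H) : H :=
  ∑' j, (lam j ^ (-β) * ⟪x, e j⟫) • e j

/-- The `Ḣ^θ`-norm `‖g‖_θ`. -/
def dotNorm (lam : ℕ → ℝ) (θ : ℝ) (e : ℕ → H) (g : H) : ℝ :=
  Real.sqrt (∑' j, lam j ^ θ * ⟪g, e j⟫ ^ 2)

/-- Membership in `Ḣ^θ`. -/
def memDot (lam : ℕ → ℝ) (θ : ℝ) (e : ℕ → H) (g : H) : Prop :=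
  Summable fun j => lam j ^ θ * ⟪g, e j⟫ ^ 2

/-- The orthogonal projection `Π_h` onto `V_h = span (eh 0, …, eh (N-1))`. -/
def projh (N : ℕ) (eh : ℕ → H) (x : H) : H :=
  ∑ j ∈ Finset.range N, ⟪x, eh j⟫ • eh j

/-- The discrete operator `L_h^{-β} Π_h`. -/
def fracPowh (N : ℕ) (lamh : ℕ → ℝ) (β : ℝ) (eh : ℕ → H) (x : H) : H :=
  ∑ j ∈ Finset.range N, (lamh j ^ (-β) * ⟪x, eh j⟫) • eh j

/-- Number of quadrature nodes to the left: `K⁻ = ⌈π²/(4βk²)⌉`. -/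
def Kminus (β k : ℝ) : ℕ := ⌈π ^ 2 / (4 * β * k ^ 2)⌉₊

/-- Number of quadrature nodes to the right: `K⁺ = ⌈π²/(4(1-β)k²)⌉`. -/
def Kplus (β k : ℝ) : ℕ := ⌈π ^ 2 / (4 * (1 - β) * k ^ 2)⌉₊

/-- Scalar action of the sinc quadrature operator `Q_{h,k}^β` on an eigenvector
with eigenvalue `μ`. -/
def quadCoeff (β k μ : ℝ) : ℝ :=
  2 * k * Real.sin (π * β) / π *
    ∑ ℓ ∈ Finset.Icc (-(Kminus β k : ℤ)) (Kplus β k : ℤ),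
      Real.exp (2 * β * (ℓ : ℝ) * k) / (1 + Real.exp (2 * (ℓ : ℝ) * k) * μ)

/-- The quadrature operator composed with the projection: `Q_{h,k}^β Π_h`. -/
def quadOp (N : ℕ) (lamh : ℕ → ℝ) (β k : ℝ) (eh : ℕ → H) (x : H) : H :=
  ∑ j ∈ Finset.range N, (quadCoeff β k (lamh j) * ⟪x, eh j⟫) • eh j

/-- The semigroup `S(t)` generated by `-L`. -/
def semiGp (lam : ℕ → ℝ) (e : ℕ → H) (t : ℝ) (x : H) : H :=
  ∑' j, (Real.exp (-(lam j) * t) * ⟪x, e j⟫) • e j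

/-- The discrete semigroup composed with the projection: `S_h(t) Π_h`. -/
def semiGph (N : ℕ) (lamh : ℕ → ℝ) (eh : ℕ → H) (t : ℝ) (x : H) : H :=
  ∑ j ∈ Finset.range N, (Real.exp (-(lamh j) * t) * ⟪x, eh j⟫) • eh j

/-- `f_{α,β}(h) = h^{d(αβ-1)}` if `αβ ≠ 1`, and `|ln h|` if `αβ = 1`. -/
def fab (α β : ℝ) (d : ℕ) (h : ℝ) : ℝ :=
  if α * β = 1 then |Real.log h| else h ^ ((d : ℝ) * (α * β - 1))

/-- The `p`-th absolute moment `μ_p` of the standard normal distribution. -/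
def stdMoment (p : ℕ) : ℝ := ∫ x, |x| ^ p ∂(gaussianReal 0 1)

/-! Since `‖∑ j < n, b j ξ j • e j‖² = ∑ j < n, b j² ξ j²`, Minkowski's inequality in `L^{p/2}`
bounds the squared `L^p` norm of a partial sum by `∑ j, b j² ‖ξ j‖_p² = μ_p^{2/p} ∑ j, b j²`.
A subsequence of the partial sums converges to `W` almost surely, and Fatou's lemma carries the
bound over to `W`. -/

open scoped ENNReal Topology

theorem Orthonormal.norm_sum_smul_sq {ι : Type*} {e : ι → H} (he : Orthonormal ℝ e)
    (s : Finset ι) (c : ι → ℝ) :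
    ‖∑ j ∈ s, c j • e j‖ ^ 2 = ∑ j ∈ s, c j ^ 2 := by
  rw [← real_inner_self_eq_norm_sq, he.inner_sum]
  simp [sq]

section LpNorm

variable {Ω : Type*} {m : MeasurableSpace Ω} {μ : Measure Ω}

theorem eLpNorm_sq_eq_eLpNorm_norm_sq {F : Type*} [NormedAddCommGroup F] (f : Ω → F)
    (p : ℝ≥0∞) : eLpNorm f p μ ^ 2 = eLpNorm (fun ω => ‖f ω‖ ^ (2 : ℝ)) (p / 2) μ := by
  rw [eLpNorm_norm_rpow f two_pos, ENNReal.ofReal_ofNat,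
    ENNReal.div_mul_cancel two_ne_zero ENNReal.ofNat_ne_top, ENNReal.rpow_two]

theorem eLpNorm_sum_smul_orthonormal_sq_le {ι : Type*} {e : ι → H} (he : Orthonormal ℝ e)
    {X : ι → Ω → ℝ} {s : Finset ι} (hX : ∀ j ∈ s, AEStronglyMeasurable (X j) μ)
    {p : ℝ≥0∞} (hp : 2 ≤ p) :
    eLpNorm (fun ω => ∑ j ∈ s, X j ω • e j) p μ ^ 2 ≤ ∑ j ∈ s, eLpNorm (X j) p μ ^ 2 := by
  have hnorm : (fun ω => ‖∑ j ∈ s, X j ω • e j‖ ^ (2 : ℝ))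
      = ∑ j ∈ s, fun ω => ‖X j ω‖ ^ (2 : ℝ) := by
    ext ω
    simp [he.norm_sum_smul_sq]
  simp only [eLpNorm_sq_eq_eLpNorm_norm_sq _ p, hnorm]
  refine eLpNorm_sum_le
    (fun j hj => ((hX j hj).norm.aemeasurable.pow_const _).aestronglyMeasurable) ?_
  rwa [ENNReal.le_div_iff_mul_le (by simp) (by simp), one_mul]

theorem eLpNorm_sum_mul_smul_orthonormal_le {ι : Type*} {e : ι → H} (he : Orthonormal ℝ e)
    {X : ι → Ω → ℝ} (hX : ∀ j, AEStronglyMeasurable (X j) μ) {p : ℝ≥0∞} (hp : 2 ≤ p)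
    {M : ℝ≥0∞} (hM : ∀ j, eLpNorm (X j) p μ ≤ M) {b : ι → ℝ} (hb : Summable fun j => b j ^ 2)
    (s : Finset ι) :
    eLpNorm (fun ω => ∑ j ∈ s, (b j * X j ω) • e j) p μ
      ≤ ENNReal.ofReal √(∑' j, b j ^ 2) * M := by
  refine (ENNReal.pow_le_pow_left_iff two_ne_zero).1 ?_
  calc eLpNorm (fun ω => ∑ j ∈ s, (b j * X j ω) • e j) p μ ^ 2
      ≤ ∑ j ∈ s, eLpNorm (b j • X j) p μ ^ 2 :=
        eLpNorm_sum_smul_orthonormal_sq_le he (fun j _ => (hX j).const_smul (b j)) hp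
    _ ≤ ∑ j ∈ s, ENNReal.ofReal (b j ^ 2) * M ^ 2 := by
        gcongr with j
        rw [eLpNorm_const_smul, mul_pow, Real.enorm_eq_ofReal_abs,
          ← ENNReal.ofReal_pow (abs_nonneg _), sq_abs]
        gcongr
        exact hM j
    _ = ENNReal.ofReal (∑ j ∈ s, b j ^ 2) * M ^ 2 := by
        rw [← Finset.sum_mul, ENNReal.ofReal_sum_of_nonneg fun j _ => sq_nonneg (b j)]
    _ ≤ ENNReal.ofReal (∑' j, b j ^ 2) * M ^ 2 := by
        gcongr
        exact hb.sum_le_tsum s fun j _ => sq_nonneg (b j)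
    _ = (ENNReal.ofReal √(∑' j, b j ^ 2) * M) ^ 2 := by
        rw [mul_pow, ← ENNReal.ofReal_pow (Real.sqrt_nonneg _),
          Real.sq_sqrt (tsum_nonneg fun j => sq_nonneg (b j))]

theorem integral_norm_pow_eq_toReal_eLpNorm_pow {F : Type*} [NormedAddCommGroup F] {f : Ω → F}
    {p : ℕ} (hp : p ≠ 0) (hf : MemLp f p μ) :
    ∫ ω, ‖f ω‖ ^ p ∂μ = (eLpNorm f p μ).toReal ^ p := by
  rw [hf.eLpNorm_eq_integral_rpow_norm (by simpa) (by simp), ENNReal.toReal_ofReal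
    (by positivity), ENNReal.toReal_natCast, ← Real.rpow_natCast _ p,
    ← Real.rpow_mul (integral_nonneg fun ω => by positivity), inv_mul_cancel₀ (by simpa),
    Real.rpow_one]
  simp_rw [Real.rpow_natCast]

theorem integral_norm_pow_le_of_eLpNorm_le {F : Type*} [NormedAddCommGroup F] {f : Ω → F}
    {p : ℕ} (hp : p ≠ 0) (hf : MemLp f p μ) {T : ℝ} (hT : 0 ≤ T) {M : ℝ≥0∞} (hM : M ≠ ∞)
    (hfM : eLpNorm f p μ ≤ ENNReal.ofReal √T * M) :
    ∫ ω, ‖f ω‖ ^ p ∂μ ≤ M.toReal ^ p * T ^ ((p : ℝ) / 2) := by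
  rw [integral_norm_pow_eq_toReal_eLpNorm_pow hp hf]
  calc (eLpNorm f p μ).toReal ^ p ≤ (√T * M.toReal) ^ p := by
        gcongr
        simpa [ENNReal.toReal_mul] using
          ENNReal.toReal_mono (ENNReal.mul_ne_top ENNReal.ofReal_ne_top hM) hfM
    _ = M.toReal ^ p * T ^ ((p : ℝ) / 2) := by
        rw [mul_pow, mul_comm, Real.sqrt_eq_rpow, ← Real.rpow_natCast (T ^ _),
          ← Real.rpow_mul hT]
        ring_nf

theorem exists_seq_ae_tendsto_of_tendsto_integral_norm_sub_sq {F : Type*} [NormedAddCommGroup F]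
    {f : ℕ → Ω → F} {g : Ω → F} (hf : ∀ n, MemLp (f n) 2 μ) (hg : MemLp g 2 μ)
    (hfg : Tendsto (fun n => ∫ ω, ‖g ω - f n ω‖ ^ 2 ∂μ) atTop (𝓝 0)) :
    ∃ φ : ℕ → ℕ, ∀ᵐ ω ∂μ, Tendsto (fun k => f (φ k) ω) atTop (𝓝 (g ω)) := by
  have hL2 : Tendsto (fun n => eLpNorm (f n - g) 2 μ) atTop (𝓝 0) := by
    have h := (ENNReal.continuous_ofReal.tendsto _).comp
      ((Real.continuous_rpow_const (by norm_num : (0 : ℝ) ≤ 2⁻¹)).tendsto 0 |>.comp hfg)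
    refine (h.congr fun n => ?_).trans_eq (by simp)
    rw [← eLpNorm_neg, neg_sub, (hg.sub (hf n)).eLpNorm_eq_integral_rpow_norm two_ne_zero
      ENNReal.ofNat_ne_top]
    simp
  obtain ⟨φ, -, hφ⟩ := (tendstoInMeasure_of_tendsto_eLpNorm two_ne_zero
    (fun n => (hf n).aestronglyMeasurable) hg.aestronglyMeasurable hL2).exists_seq_tendsto_ae
  exact ⟨φ, hφ⟩

theorem eLpNorm_eq_eLpNorm_id_gaussianReal {X : Ω → ℝ} (hX : AEMeasurable X μ)
    (hXμ : μ.map X = gaussianReal 0 1) (p : ℝ≥0∞) :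
    eLpNorm X p μ = eLpNorm id p (gaussianReal 0 1) := by
  rw [← hXμ, eLpNorm_map_measure aestronglyMeasurable_id hX]
  rfl

end LpNorm

theorem stdMoment_eq_toReal_eLpNorm_pow {p : ℕ} (hp : p ≠ 0) :
    stdMoment p = (eLpNorm id p (gaussianReal 0 1)).toReal ^ p := by
  rw [← integral_norm_pow_eq_toReal_eLpNorm_pow hp (memLp_id_gaussianReal' _ (by simp))]
  simp [stdMoment]

theorem stmt5_general
    {H : Type*} [NormedAddCommGroup H] [InnerProductSpace ℝ H]
    {Ω : Type*} [MeasurableSpace Ω] (P : Measure Ω) [IsProbabilityMeasure P]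
    (e : ℕ → H) (he : Orthonormal ℝ e)
    (ξ : ℕ → Ω → ℝ) (hξmeas : ∀ j, Measurable (ξ j))
    (hξgauss : ∀ j, Measure.map (ξ j) P = gaussianReal 0 1)
    (p : ℕ) (hp : 2 ≤ p)
    (b : ℕ → ℝ) (hb : Summable fun j => b j ^ 2)
    (W : Ω → H) (hWmeas : AEStronglyMeasurable W P)
    (hW : Tendsto
      (fun n => ∫ ω, ‖W ω - ∑ j ∈ Finset.range n, (b j * ξ j ω) • e j‖ ^ 2 ∂P)
      atTop (nhds 0)) :
    (∫ ω, ‖W ω‖ ^ p ∂P) ≤ stdMoment p * (∑' j, b j ^ 2) ^ ((p : ℝ) / 2) := by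
  have hp0 : p ≠ 0 := by omega
  have hp2 : (2 : ℝ≥0∞) ≤ p := by exact_mod_cast hp
  -- `hW` is void unless `‖W - S n‖²` is integrable (otherwise the integrals are `0`),
  -- so `W ∈ L^p` has to come from the integrability of `‖W‖ ^ p`.
  by_cases hWp : Integrable (fun ω => ‖W ω‖ ^ p) P
  swap
  · rw [integral_undef hWp]
    exact mul_nonneg (integral_nonneg fun x => by positivity) (by positivity)
  have hWLp : MemLp W p P :=
    (integrable_norm_rpow_iff hWmeas (by simpa) (by simp)).1 (by simpa using hWp)
  set M := eLpNorm id p (gaussianReal 0 1)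
  have hM : M ≠ ∞ := (memLp_id_gaussianReal' _ (by simp)).eLpNorm_ne_top
  set T := ∑' j, b j ^ 2
  have hT : 0 ≤ T := tsum_nonneg fun j => sq_nonneg (b j)
  set S : ℕ → Ω → H := fun n ω => ∑ j ∈ Finset.range n, (b j * ξ j ω) • e j
  have hS : ∀ n, eLpNorm (S n) p P ≤ ENNReal.ofReal √T * M := fun n =>
    eLpNorm_sum_mul_smul_orthonormal_le he (fun j => (hξmeas j).aestronglyMeasurable) hp2
      (fun j => (eLpNorm_eq_eLpNorm_id_gaussianReal (hξmeas j).aemeasurable (hξgauss j) p).le)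
      hb _
  have hSLp : ∀ n, MemLp (S n) p P := fun n =>
    ⟨by fun_prop, (hS n).trans_lt (ENNReal.mul_lt_top ENNReal.ofReal_lt_top hM.lt_top)⟩
  obtain ⟨φ, hφ⟩ := exists_seq_ae_tendsto_of_tendsto_integral_norm_sub_sq
    (fun n => (hSLp n).mono_exponent hp2) (hWLp.mono_exponent hp2) hW
  have hWM : eLpNorm W p P ≤ ENNReal.ofReal √T * M := Lp.eLpNorm_le_of_ae_tendsto
    (Eventually.of_forall fun k => hS (φ k)) (fun k => (hSLp _).aestronglyMeasurable) hφ
  rw [stdMoment_eq_toReal_eLpNorm_pow hp0]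
  exact integral_norm_pow_le_of_eLpNorm_le hp0 hWLp hT hM hWM

/-- If `W` is the `L²(Ω;H)`-limit of `Σ_{j<n} b_j ξ_j e_j` with
`Σ b_j² < ∞`, then `E[‖W‖^p] ≤ μ_p (Σ b_j²)^{p/2}`. -/
theorem stmt5
    {H : Type*} [NormedAddCommGroup H] [InnerProductSpace ℝ H] [CompleteSpace H]
    {Ω : Type*} [MeasurableSpace Ω] (P : Measure Ω) [IsProbabilityMeasure P]
    (e : ℕ → H) (he : Orthonormal ℝ e)
    (hbasis : (Submodule.span ℝ (Set.range e)).topologicalClosure = ⊤)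
    (ξ : ℕ → Ω → ℝ) (hξmeas : ∀ j, Measurable (ξ j))
    (hξindep : iIndepFun ξ P)
    (hξgauss : ∀ j, Measure.map (ξ j) P = gaussianReal 0 1)
    (p : ℕ) (hp : 2 ≤ p)
    (b : ℕ → ℝ) (hb : Summable fun j => b j ^ 2)
    (W : Ω → H) (hWmeas : AEStronglyMeasurable W P)
    (hW : Tendsto
      (fun n => ∫ ω, ‖W ω - ∑ j ∈ Finset.range n, (b j * ξ j ω) • e j‖ ^ 2 ∂P)
      atTop (nhds 0)) :
    (∫ ω, ‖W ω‖ ^ p ∂P) ≤ stdMoment p * (∑' j, b j ^ 2) ^ ((p : ℝ) / 2) :=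
  stmt5_general P e he ξ hξmeas hξgauss p hp b hb W hWmeas hW
end
end

section
/- Suppose Assumption (iv) holds, 2αβ > 1, and d ∈ ℕ. Set θ* := d(2αβ−1) − 2β; let θ > min{θ*, s−2β} if θ* ≥ 0, and set θ := 0 otherwise. Then there exists a constant C > 0, independent of h, such that ‖(L^{−β} − L_h^{−β}Π_h)g‖ ≤ C h^{min{d(2αβ−1), s}} ‖g‖_θ for all g ∈ Ḣ^θ and all h ∈ (0,h₀). -/
noncomputable section
open MeasureTheory ProbabilityTheory Real Filter
open scoped InnerProductSpace RealInnerProductSpace NNReal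

variable {H : Type*} [NormedAddCommGroup H] [InnerProductSpace ℝ H]

/-!
Both `L^{-β}` and `L_h^{-β} Π_h` are given by the Balakrishnan formula
`Γ(β) L^{-β} = ∫₀^∞ t^{β-1} S(t) dt`, so `Γ(β) (L^{-β} - L_h^{-β} Π_h) g` is the integral of
`t^{β-1} (S(t) - S_h(t) Π_h) g`. Split at `t = 1`. For large `t`, Assumption (iv) with `(0, s)`
gives decay `h^s t^{-s/2}`, integrable against `t^{β-1}` since `s > 2β`. For small `t`,
Assumption (iv) with `(θ', σ)`, `σ = min{d(2αβ-1), s}`, `θ' = min{θ, σ}` gives `h^σ t^{(θ'-σ)/2}`,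
integrable against `t^{β-1}` exactly when `θ' > σ - 2β`; this is what the lower bound on `θ`
guarantees. The `Ḣ^{θ'}`- and `Ḣ^0`-norms are dominated by the `Ḣ^θ`-norm since `λ_j ≥ λ_0`.
-/

open Set

theorem integrableOn_Ioi_rpow_mul_exp_neg_mul {β μ : ℝ} (hβ : 0 < β) (hμ : 0 < μ) :
    IntegrableOn (fun t : ℝ => t ^ (β - 1) * Real.exp (-μ * t)) (Ioi 0) := by
  simpa only [Real.rpow_one] using
    integrableOn_rpow_mul_exp_neg_mul_rpow (p := 1) (by linarith) one_pos hμ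

theorem integral_Ioi_rpow_mul_exp_neg_mul {β μ : ℝ} (hβ : 0 < β) (hμ : 0 < μ) :
    ∫ t in Ioi (0 : ℝ), t ^ (β - 1) * Real.exp (-μ * t) = Real.Gamma β * μ ^ (-β) := by
  simp_rw [neg_mul]
  rw [Real.integral_rpow_mul_exp_neg_mul_Ioi hβ hμ, one_div, Real.inv_rpow hμ.le,
    Real.rpow_neg hμ.le, mul_comm]

theorem norm_exp_neg_mul_mul_le {μ m t : ℝ} (hμ : m ≤ μ) (ht : 0 < t) (c : ℝ) :
    ‖Real.exp (-μ * t) * c‖ ≤ Real.exp (-m * t) * |c| := by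
  rw [norm_mul, Real.norm_of_nonneg (Real.exp_pos _).le, Real.norm_eq_abs]
  exact mul_le_mul_of_nonneg_right (Real.exp_le_exp.2 (by nlinarith)) (abs_nonneg _)

section ExpSeries

variable {β m : ℝ} {μ c : ℕ → ℝ}

theorem integrableOn_Ioi_rpow_mul_tsum_exp (hβ : 0 < β) (hm : 0 < m) (hμ : ∀ j, m ≤ μ j)
    (hc : Summable fun j => |c j|) :
    IntegrableOn (fun t : ℝ => t ^ (β - 1) * ∑' j, Real.exp (-μ j * t) * c j) (Ioi 0) := by
  have hcont : ContinuousOn (fun t => ∑' j, Real.exp (-μ j * t) * c j) (Ioi 0) :=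
    continuousOn_tsum (fun j => by fun_prop) hc fun j t ht =>
      (norm_exp_neg_mul_mul_le (hm.le.trans (hμ j)) ht (c j)).trans
        (mul_le_of_le_one_left (abs_nonneg _)
          (Real.exp_le_one_iff.2 (by nlinarith [mem_Ioi.1 ht])))
  refine ((integrableOn_Ioi_rpow_mul_exp_neg_mul hβ hm).mul_const (∑' j, |c j|)).mono' ?_ ?_
  · exact (Measurable.aestronglyMeasurable (by fun_prop)).mul
      (hcont.aestronglyMeasurable measurableSet_Ioi)
  filter_upwards [ae_restrict_mem measurableSet_Ioi] with t ht
  have hsum_le : ‖∑' j, Real.exp (-μ j * t) * c j‖ ≤ Real.exp (-m * t) * ∑' j, |c j| := by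
    rw [← tsum_mul_left]
    exact tsum_of_norm_bounded (hc.mul_left _).hasSum fun j => norm_exp_neg_mul_mul_le (hμ j) ht _
  rw [norm_mul, Real.norm_of_nonneg (Real.rpow_nonneg (le_of_lt ht) _), mul_assoc]
  exact mul_le_mul_of_nonneg_left hsum_le (Real.rpow_nonneg (le_of_lt ht) _)

theorem integral_Ioi_rpow_mul_tsum_exp (hβ : 0 < β) (hm : 0 < m) (hμ : ∀ j, m ≤ μ j)
    (hc : Summable fun j => |c j|) :
    ∫ t in Ioi (0 : ℝ), t ^ (β - 1) * ∑' j, Real.exp (-μ j * t) * c j =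
      Real.Gamma β * ∑' j, μ j ^ (-β) * c j := by
  have hμpos : ∀ j, 0 < μ j := fun j => hm.trans_le (hμ j)
  set F : ℕ → ℝ → ℝ := fun j t => t ^ (β - 1) * Real.exp (-μ j * t) * c j
  have hF_int : ∀ j, IntegrableOn (F j) (Ioi 0) := fun j =>
    (integrableOn_Ioi_rpow_mul_exp_neg_mul hβ (hμpos j)).mul_const _
  have hF_norm : ∀ j, ∫ t in Ioi (0 : ℝ), ‖F j t‖ = Real.Gamma β * μ j ^ (-β) * |c j| := by
    intro j
    rw [← integral_Ioi_rpow_mul_exp_neg_mul hβ (hμpos j), ← integral_mul_const]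
    refine setIntegral_congr_fun measurableSet_Ioi fun t ht => ?_
    simp only [F, norm_mul, Real.norm_eq_abs, abs_of_pos (Real.exp_pos _),
      abs_of_nonneg (Real.rpow_nonneg (le_of_lt ht) _)]
  have hF_sum : Summable fun j => ∫ t in Ioi (0 : ℝ), ‖F j t‖ := by
    simp_rw [hF_norm]
    have hΓ := Real.Gamma_pos_of_pos hβ
    refine (hc.mul_left (Real.Gamma β * m ^ (-β))).of_nonneg_of_le
      (fun j => by have := hμpos j; positivity) fun j => ?_
    have := Real.rpow_le_rpow_of_nonpos hm (hμ j) (by linarith : -β ≤ 0)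
    gcongr
  have hF_tsum : ∀ t ∈ Ioi (0 : ℝ),
      ∑' j, F j t = t ^ (β - 1) * ∑' j, Real.exp (-μ j * t) * c j := fun t _ => by
    simp only [F, mul_assoc, tsum_mul_left]
  rw [← setIntegral_congr_fun measurableSet_Ioi hF_tsum,
    ← integral_tsum_of_summable_integral_norm hF_int hF_sum, ← tsum_mul_left]
  refine tsum_congr fun j => ?_
  rw [integral_mul_const, integral_Ioi_rpow_mul_exp_neg_mul hβ (hμpos j), mul_assoc]

end ExpSeries

theorem integrableOn_and_integral_Ioi_rpow_mul_sum_exp {β : ℝ} (hβ : 0 < β)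
    {μ c : ℕ → ℝ} (hμ : ∀ j, 0 < μ j) (s : Finset ℕ) :
    IntegrableOn (fun t : ℝ => t ^ (β - 1) * ∑ j ∈ s, Real.exp (-μ j * t) * c j) (Ioi 0) ∧
    ∫ t in Ioi (0 : ℝ), t ^ (β - 1) * ∑ j ∈ s, Real.exp (-μ j * t) * c j =
      Real.Gamma β * ∑ j ∈ s, μ j ^ (-β) * c j := by
  have hF : (fun t : ℝ => t ^ (β - 1) * ∑ j ∈ s, Real.exp (-μ j * t) * c j) =
      fun t => ∑ j ∈ s, t ^ (β - 1) * Real.exp (-μ j * t) * c j := by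
    simp only [Finset.mul_sum, mul_assoc]
  have hF_int : ∀ j ∈ s, IntegrableOn
      (fun t : ℝ => t ^ (β - 1) * Real.exp (-μ j * t) * c j) (Ioi 0) := fun j _ =>
    (integrableOn_Ioi_rpow_mul_exp_neg_mul hβ (hμ j)).mul_const _
  rw [hF, integral_finsetSum s hF_int, Finset.mul_sum]
  refine ⟨integrable_finsetSum s hF_int, Finset.sum_congr rfl fun j _ => ?_⟩
  rw [integral_mul_const, integral_Ioi_rpow_mul_exp_neg_mul hβ (hμ j), mul_assoc]

theorem Orthonormal.summable_abs_inner_mul_inner {ι : Type*} {e : ι → H} (he : Orthonormal ℝ e)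
    (x y : H) : Summable fun j => |⟪x, e j⟫ * ⟪y, e j⟫| := by
  refine ((he.inner_products_summable x).add (he.inner_products_summable y)).div_const 2
    |>.of_nonneg_of_le (fun j => abs_nonneg _) fun j => ?_
  have := two_mul_le_add_sq |⟪x, e j⟫| |⟪y, e j⟫|
  simp only [Real.norm_eq_abs, real_inner_comm (e j), sq_abs, abs_mul] at this ⊢
  linarith

theorem Orthonormal.inner_tsum_smul [CompleteSpace H] {ι : Type*} {e : ι → H}
    (he : Orthonormal ℝ e) {f : ι → ℝ} {M : ℝ} (hf : ∀ j, |f j| ≤ M) (x y : H) :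
    ⟪∑' j, (f j * ⟪x, e j⟫) • e j, y⟫ = ∑' j, f j * (⟪x, e j⟫ * ⟪y, e j⟫) := by
  have hsq : Summable fun j => ‖f j * ⟪x, e j⟫‖ ^ 2 := by
    refine ((he.inner_products_summable x).mul_left (M ^ 2)).of_nonneg_of_le
      (fun j => sq_nonneg _) fun j => ?_
    rw [norm_mul, mul_pow, real_inner_comm]
    gcongr
    exact (Real.norm_eq_abs _).trans_le (hf j)
  have hsum : Summable fun j => (f j * ⟪x, e j⟫) • e j := by
    simpa only [LinearIsometry.toSpanSingleton_apply] using
      (he.orthogonalFamily.summable_iff_norm_sq_summable _).2 hsq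
  rw [real_inner_comm, ← innerSL_apply_apply ℝ, (innerSL ℝ y).map_tsum hsum]
  simp only [innerSL_apply_apply, real_inner_smul_right, real_inner_comm (e _) y, mul_assoc]

theorem inner_sum_smul {ι : Type*} (s : Finset ι) (a : ι → ℝ) (f : ι → H) (x y : H) :
    ⟪∑ j ∈ s, (a j * ⟪x, f j⟫) • f j, y⟫ = ∑ j ∈ s, a j * (⟪x, f j⟫ * ⟪y, f j⟫) := by
  rw [sum_inner]
  exact Finset.sum_congr rfl fun j _ => by rw [real_inner_smul_left, real_inner_comm y, mul_assoc]

theorem integrableOn_and_integral_rpow_mul_inner_semiGp [CompleteSpace H] {e : ℕ → H}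
    (he : Orthonormal ℝ e) {lam : ℕ → ℝ} (hpos : ∀ j, 0 < lam j) (hmono : Monotone lam)
    {β : ℝ} (hβ : 0 < β) (g y : H) :
    IntegrableOn (fun t : ℝ => t ^ (β - 1) * ⟪semiGp lam e t g, y⟫) (Ioi 0) ∧
    ∫ t in Ioi (0 : ℝ), t ^ (β - 1) * ⟪semiGp lam e t g, y⟫ =
      Real.Gamma β * ⟪fracPow lam β e g, y⟫ := by
  have hS : EqOn (fun t : ℝ => t ^ (β - 1) * ⟪semiGp lam e t g, y⟫)
      (fun t => t ^ (β - 1) * ∑' j, Real.exp (-lam j * t) * (⟪g, e j⟫ * ⟪y, e j⟫)) (Ioi 0) := by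
    intro t ht
    refine congrArg _ (he.inner_tsum_smul (M := 1) (fun j => ?_) g y)
    rw [abs_of_pos (Real.exp_pos _), Real.exp_le_one_iff]
    nlinarith [hpos j, mem_Ioi.1 ht]
  have hlow : ∀ j, lam 0 ≤ lam j := fun j => hmono (Nat.zero_le j)
  have hL : ⟪fracPow lam β e g, y⟫ = ∑' j, lam j ^ (-β) * (⟪g, e j⟫ * ⟪y, e j⟫) :=
    he.inner_tsum_smul (M := lam 0 ^ (-β)) (fun j => by
      rw [abs_of_pos (Real.rpow_pos_of_pos (hpos j) _)]
      exact Real.rpow_le_rpow_of_nonpos (hpos 0) (hlow j) (by linarith)) g y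
  have hc := he.summable_abs_inner_mul_inner g y
  refine ⟨(integrableOn_Ioi_rpow_mul_tsum_exp hβ (hpos 0) hlow hc).congr_fun hS.symm
    measurableSet_Ioi, ?_⟩
  rw [setIntegral_congr_fun measurableSet_Ioi hS,
    integral_Ioi_rpow_mul_tsum_exp hβ (hpos 0) hlow hc, hL]

theorem integrableOn_and_integral_rpow_mul_inner_semiGph (N : ℕ) {μ : ℕ → ℝ}
    (hμ : ∀ j, 0 < μ j) (f : ℕ → H) {β : ℝ} (hβ : 0 < β) (g y : H) :
    IntegrableOn (fun t : ℝ => t ^ (β - 1) * ⟪semiGph N μ f t g, y⟫) (Ioi 0) ∧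
    ∫ t in Ioi (0 : ℝ), t ^ (β - 1) * ⟪semiGph N μ f t g, y⟫ =
      Real.Gamma β * ⟪fracPowh N μ β f g, y⟫ := by
  simp only [semiGph, fracPowh, inner_sum_smul]
  exact integrableOn_and_integral_Ioi_rpow_mul_sum_exp hβ hμ _

theorem setIntegral_Ioi_zero_le_of_le_rpow {F : ℝ → ℝ} (hF : IntegrableOn F (Ioi 0))
    {a b A B : ℝ} (ha : -1 < a) (hb : b < -1)
    (h0 : ∀ t ∈ Ioc (0 : ℝ) 1, F t ≤ A * t ^ a) (h1 : ∀ t ∈ Ioi (1 : ℝ), F t ≤ B * t ^ b) :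
    ∫ t in Ioi (0 : ℝ), F t ≤ A / (a + 1) - B / (b + 1) := by
  have hF0 : IntegrableOn F (Ioc 0 1) := hF.mono_set Ioc_subset_Ioi_self
  have hF1 : IntegrableOn F (Ioi 1) := hF.mono_set (Ioi_subset_Ioi zero_le_one)
  have hI0 : ∫ t in Ioc (0 : ℝ) 1, t ^ a = 1 / (a + 1) := by
    rw [← intervalIntegral.integral_of_le zero_le_one, integral_rpow (Or.inl ha), Real.one_rpow,
      Real.zero_rpow (by linarith), sub_zero]
  have hI1 : ∫ t in Ioi (1 : ℝ), t ^ b = -1 / (b + 1) := by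
    rw [integral_Ioi_rpow_of_lt hb one_pos, Real.one_rpow]
  have e0 := setIntegral_mono_on hF0
    ((intervalIntegral.intervalIntegrable_rpow' ha).1.const_mul A) measurableSet_Ioc h0
  have e1 := setIntegral_mono_on hF1
    ((integrableOn_Ioi_rpow_of_lt hb one_pos).const_mul B) measurableSet_Ioi h1
  rw [integral_const_mul, hI0] at e0
  rw [integral_const_mul, hI1] at e1
  rw [← Ioc_union_Ioi_eq_Ioi zero_le_one,
    setIntegral_union Ioc_disjoint_Ioi_same measurableSet_Ioi hF0 hF1]
  calc _ ≤ A * (1 / (a + 1)) + B * (-1 / (b + 1)) := add_le_add e0 e1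
    _ = _ := by ring

theorem mul_le_of_mul_sq_le_mul {c x M : ℝ} (hx : 0 ≤ x) (hM : 0 ≤ M)
    (h : c * x ^ 2 ≤ M * x) : c * x ≤ M := by
  rcases hx.eq_or_lt with rfl | hx
  · simpa using hM
  · exact le_of_mul_le_mul_right (by nlinarith) hx

theorem gamma_mul_norm_fracPow_sub_fracPowh_le [CompleteSpace H] {e : ℕ → H}
    (he : Orthonormal ℝ e) {lam : ℕ → ℝ} (hpos : ∀ j, 0 < lam j) (hmono : Monotone lam)
    (N : ℕ) {μ : ℕ → ℝ} (hμ : ∀ j, 0 < μ j) (f : ℕ → H) {β p q A B : ℝ} (hβ : 0 < β)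
    (hp : p < β) (hq : β < q) {g : H}
    (hsmall : ∀ t ∈ Ioc (0 : ℝ) 1, ‖semiGp lam e t g - semiGph N μ f t g‖ ≤ A * t ^ (-p))
    (hlarge : ∀ t ∈ Ioi (1 : ℝ), ‖semiGp lam e t g - semiGph N μ f t g‖ ≤ B * t ^ (-q)) :
    Real.Gamma β * ‖fracPow lam β e g - fracPowh N μ β f g‖ ≤ A / (β - p) + B / (q - β) := by
  set E := fracPow lam β e g - fracPowh N μ β f g
  obtain ⟨hint, hval⟩ := integrableOn_and_integral_rpow_mul_inner_semiGp he hpos hmono hβ g E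
  obtain ⟨hint_h, hval_h⟩ := integrableOn_and_integral_rpow_mul_inner_semiGph N hμ f hβ g E
  have hint_sub : IntegrableOn
      (fun t : ℝ => t ^ (β - 1) * ⟪semiGp lam e t g - semiGph N μ f t g, E⟫) (Ioi 0) := by
    simpa only [inner_sub_left, mul_sub, Pi.sub_def] using hint.sub hint_h
  have hrepr : Real.Gamma β * ‖E‖ ^ 2 =
      ∫ t in Ioi (0 : ℝ), t ^ (β - 1) * ⟪semiGp lam e t g - semiGph N μ f t g, E⟫ := by
    simp only [inner_sub_left, mul_sub]
    rw [integral_sub hint hint_h, hval, hval_h, ← mul_sub, ← inner_sub_left,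
      real_inner_self_eq_norm_sq]
  have hpointwise : ∀ C r t, 0 < t → ‖semiGp lam e t g - semiGph N μ f t g‖ ≤ C * t ^ (-r) →
      t ^ (β - 1) * ⟪semiGp lam e t g - semiGph N μ f t g, E⟫ ≤
        (C * ‖E‖) * t ^ (β - 1 - r) := fun C r t ht hle => by
    calc _ ≤ t ^ (β - 1) * (C * t ^ (-r) * ‖E‖) :=
          mul_le_mul_of_nonneg_left ((real_inner_le_norm _ _).trans
            (mul_le_mul_of_nonneg_right hle (norm_nonneg _))) (Real.rpow_nonneg ht.le _)
      _ = _ := by rw [sub_eq_add_neg (β - 1), Real.rpow_add ht]; ring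
  have hbound := setIntegral_Ioi_zero_le_of_le_rpow hint_sub (by linarith : -1 < β - 1 - p)
    (by linarith : β - 1 - q < -1) (fun t ht => hpointwise A p t ht.1 (hsmall t ht))
    (fun t ht => hpointwise B q t (one_pos.trans ht) (hlarge t ht))
  have hA : 0 ≤ A := by
    simpa using (norm_nonneg _).trans (hsmall 1 ⟨one_pos, le_rfl⟩)
  have hB : 0 ≤ B := (mul_nonneg_iff_of_pos_right (Real.rpow_pos_of_pos two_pos (-q))).1
    ((norm_nonneg _).trans (hlarge 2 (mem_Ioi.2 one_lt_two)))
  have hM : 0 ≤ A / (β - p) + B / (q - β) :=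
    add_nonneg (div_nonneg hA (by linarith)) (div_nonneg hB (by linarith))
  refine mul_le_of_mul_sq_le_mul (norm_nonneg E) hM ?_
  calc Real.Gamma β * ‖E‖ ^ 2
      ≤ A * ‖E‖ / (β - 1 - p + 1) - B * ‖E‖ / (β - 1 - q + 1) := hrepr ▸ hbound
    _ = (A / (β - p) + B / (q - β)) * ‖E‖ := by
      rw [show β - 1 - q + 1 = -(q - β) by ring, show β - 1 - p + 1 = β - p by ring, div_neg]
      ring

theorem rpow_le_rpow_sub_mul_rpow {a b θ₁ θ₂ : ℝ} (ha : 0 < a) (hab : a ≤ b) (hθ : θ₁ ≤ θ₂) :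
    b ^ θ₁ ≤ a ^ (θ₁ - θ₂) * b ^ θ₂ := by
  rw [← sub_add_cancel θ₁ θ₂, Real.rpow_add (ha.trans_le hab), add_sub_cancel_right]
  exact mul_le_mul_of_nonneg_right (Real.rpow_le_rpow_of_nonpos ha hab (by linarith))
    (Real.rpow_nonneg (ha.le.trans hab) _)

section SobolevScale

variable {lam : ℕ → ℝ} {e : ℕ → H} {g : H} {θ₁ θ₂ : ℝ}

theorem rpow_mul_inner_sq_le (hpos : ∀ j, 0 < lam j) (hmono : Monotone lam) (hθ : θ₁ ≤ θ₂)
    (j : ℕ) : lam j ^ θ₁ * ⟪g, e j⟫ ^ 2 ≤ lam 0 ^ (θ₁ - θ₂) * (lam j ^ θ₂ * ⟪g, e j⟫ ^ 2) := by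
  rw [← mul_assoc]
  exact mul_le_mul_of_nonneg_right
    (rpow_le_rpow_sub_mul_rpow (hpos 0) (hmono (Nat.zero_le j)) hθ) (sq_nonneg _)

theorem memDot_of_le (hpos : ∀ j, 0 < lam j) (hmono : Monotone lam) (hθ : θ₁ ≤ θ₂)
    (hg : memDot lam θ₂ e g) : memDot lam θ₁ e g :=
  (hg.mul_left _).of_nonneg_of_le (fun j => by have := hpos j; positivity)
    (rpow_mul_inner_sq_le hpos hmono hθ)

theorem dotNorm_nonneg : 0 ≤ dotNorm lam θ₁ e g := Real.sqrt_nonneg _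

theorem dotNorm_le_of_le (hpos : ∀ j, 0 < lam j) (hmono : Monotone lam) (hθ : θ₁ ≤ θ₂)
    (hg : memDot lam θ₂ e g) :
    dotNorm lam θ₁ e g ≤ lam 0 ^ ((θ₁ - θ₂) / 2) * dotNorm lam θ₂ e g := by
  have hsq : lam 0 ^ (θ₁ - θ₂) = (lam 0 ^ ((θ₁ - θ₂) / 2)) ^ 2 := by
    rw [← Real.rpow_two, ← Real.rpow_mul (hpos 0).le, div_mul_cancel₀ _ two_ne_zero]
  rw [dotNorm, dotNorm, ← Real.sqrt_sq (Real.rpow_nonneg (hpos 0).le ((θ₁ - θ₂) / 2)),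
    ← Real.sqrt_mul (sq_nonneg _), ← hsq, ← tsum_mul_left]
  exact Real.sqrt_le_sqrt ((memDot_of_le hpos hmono hθ hg).tsum_le_tsum
    (rpow_mul_inner_sq_le hpos hmono hθ) (hg.mul_left _))

end SobolevScale

theorem gamma_mul_norm_fracPow_sub_fracPowh_le_of_semiGp_sub_semiGph_le [CompleteSpace H]
    {e : ℕ → H} (he : Orthonormal ℝ e) {lam : ℕ → ℝ} (hpos : ∀ j, 0 < lam j)
    (hmono : Monotone lam) (N : ℕ) {μ : ℕ → ℝ} (hμ : ∀ j, 0 < μ j) (f : ℕ → H)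
    {β s θ θ' σ C₃ h : ℝ} (hβ : 0 < β) (hsβ : 2 * β < s) (hθ' : 0 ≤ θ') (hθ'σ : θ' ≤ σ)
    (hσs : σ ≤ s) (hθ'θ : θ' ≤ θ) (hσθ' : σ - 2 * β < θ') (hC₃ : 0 ≤ C₃) (hh0 : 0 < h)
    (hh1 : h ≤ 1)
    (hS : ∀ θ' σ : ℝ, 0 ≤ θ' → θ' ≤ σ → σ ≤ s → ∀ t : ℝ, 0 < t → ∀ g : H,
      memDot lam θ' e g → ‖semiGp lam e t g - semiGph N μ f t g‖ ≤
        C₃ * h ^ σ * t ^ ((θ' - σ) / 2) * dotNorm lam θ' e g)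
    {g : H} (hg : memDot lam θ e g) :
    Real.Gamma β * ‖fracPow lam β e g - fracPowh N μ β f g‖ ≤
      C₃ * (lam 0 ^ ((θ' - θ) / 2) / (β - (σ - θ') / 2) + lam 0 ^ ((0 - θ) / 2) / (s / 2 - β)) *
        h ^ σ * dotNorm lam θ e g := by
  have hsmall : ∀ t ∈ Ioc (0 : ℝ) 1, ‖semiGp lam e t g - semiGph N μ f t g‖ ≤
      C₃ * h ^ σ * dotNorm lam θ' e g * t ^ (-((σ - θ') / 2)) := fun t ht => by
    refine (hS θ' σ hθ' hθ'σ hσs t ht.1 g (memDot_of_le hpos hmono hθ'θ hg)).trans_eq ?_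
    rw [show (θ' - σ) / 2 = -((σ - θ') / 2) by ring]
    ring
  have hlarge : ∀ t ∈ Ioi (1 : ℝ), ‖semiGp lam e t g - semiGph N μ f t g‖ ≤
      C₃ * h ^ s * dotNorm lam 0 e g * t ^ (-(s / 2)) := fun t ht => by
    refine (hS 0 s le_rfl (by linarith) le_rfl t (one_pos.trans ht) g
      (memDot_of_le hpos hmono (hθ'.trans hθ'θ) hg)).trans_eq ?_
    rw [show (0 - s) / 2 = -(s / 2) by ring]
    ring
  refine (gamma_mul_norm_fracPow_sub_fracPowh_le he hpos hmono N hμ f hβ (by linarith)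
    (by linarith) hsmall hlarge).trans ?_
  have hp : 0 < β - (σ - θ') / 2 := by linarith
  have hq : 0 < s / 2 - β := by linarith
  have hhs : h ^ s ≤ h ^ σ := Real.rpow_le_rpow_of_exponent_ge hh0 hh1 hσs
  have hg' := dotNorm_le_of_le hpos hmono hθ'θ hg
  have hg0 := dotNorm_le_of_le hpos hmono (hθ'.trans hθ'θ) hg
  calc _ ≤ C₃ * h ^ σ * (lam 0 ^ ((θ' - θ) / 2) * dotNorm lam θ e g) / (β - (σ - θ') / 2) +
        C₃ * h ^ σ * (lam 0 ^ ((0 - θ) / 2) * dotNorm lam θ e g) / (s / 2 - β) := by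
        gcongr; exact dotNorm_nonneg
    _ = _ := by ring

theorem stmt7_general
    {H : Type*} [NormedAddCommGroup H] [InnerProductSpace ℝ H] [CompleteSpace H]
    (e : ℕ → H) (he : Orthonormal ℝ e)
    (lam : ℕ → ℝ) (hlam_pos : ∀ j, 0 < lam j) (hlam_mono : Monotone lam)
    (β : ℝ) (hβ : β ∈ Set.Ioo (0 : ℝ) 1) (α : ℝ)
    (hαβ : 1 < 2 * α * β) (d : ℕ)
    (N : ℝ → ℕ) (eh : ℝ → ℕ → H) (lamh : ℝ → ℕ → ℝ)
    (hlamh_pos : ∀ h j, 0 < lamh h j)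
    -- Assumption (iv)
    (h₀ : ℝ) (hh₀ : h₀ ∈ Set.Ioo (0 : ℝ) 1) (s : ℝ) (hsβ : 2 * β < s)
    (C₃ : ℝ) (hC₃ : 0 < C₃)
    (hiv : ∀ θ' σ : ℝ, 0 ≤ θ' → θ' ≤ σ → σ ≤ s → ∀ t : ℝ, 0 < t →
      ∀ h ∈ Set.Ioo (0 : ℝ) h₀, ∀ g : H, memDot lam θ' e g →
      ‖semiGp lam e t g - semiGph (N h) (lamh h) (eh h) t g‖ ≤
        C₃ * h ^ σ * t ^ ((θ' - σ) / 2) * dotNorm lam θ' e g)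
    -- θ as specified, with θ* = d(2αβ−1) − 2β
    (θ : ℝ)
    (hθ₁ : 0 ≤ (d : ℝ) * (2 * α * β - 1) - 2 * β →
      min ((d : ℝ) * (2 * α * β - 1) - 2 * β) (s - 2 * β) < θ)
    (hθ₂ : (d : ℝ) * (2 * α * β - 1) - 2 * β < 0 → θ = 0) :
    ∃ C > (0 : ℝ),
      ∀ g : H, memDot lam θ e g →
      ∀ h ∈ Set.Ioo (0 : ℝ) h₀,
        ‖fracPow lam β e g - fracPowh (N h) (lamh h) β (eh h) g‖ ≤
          C * h ^ min ((d : ℝ) * (2 * α * β - 1)) s * dotNorm lam θ e g := by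
  obtain ⟨hβ0, -⟩ := hβ
  set σ := min ((d : ℝ) * (2 * α * β - 1)) s
  have hσ : 0 ≤ σ := le_min (mul_nonneg d.cast_nonneg (by linarith)) (by linarith)
  have hθ0 : 0 ≤ θ := by
    rcases le_or_gt 0 ((d : ℝ) * (2 * α * β - 1) - 2 * β) with hθs | hθs
    · exact (le_min hθs (by linarith)).trans (hθ₁ hθs).le
    · exact (hθ₂ hθs).ge
  have hσθ : σ - 2 * β < θ := by
    rw [← min_sub_sub_right]
    rcases le_or_gt 0 ((d : ℝ) * (2 * α * β - 1) - 2 * β) with hθs | hθs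
    · exact hθ₁ hθs
    · exact (hθ₂ hθs).symm ▸ (min_le_left _ _).trans_lt hθs
  set θ' := min θ σ
  have hp : 0 < β - (σ - θ') / 2 := by linarith [lt_min hσθ (by linarith : σ - 2 * β < σ)]
  have hq : 0 < s / 2 - β := by linarith
  have hΓ := Real.Gamma_pos_of_pos hβ0
  refine ⟨C₃ * (lam 0 ^ ((θ' - θ) / 2) / (β - (σ - θ') / 2) +
      lam 0 ^ ((0 - θ) / 2) / (s / 2 - β)) / Real.Gamma β,
    by have := hlam_pos 0; positivity, fun g hg h hh => ?_⟩
  rw [div_mul_eq_mul_div, div_mul_eq_mul_div, le_div_iff₀ hΓ, mul_comm]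
  exact gamma_mul_norm_fracPow_sub_fracPowh_le_of_semiGp_sub_semiGph_le he hlam_pos hlam_mono
    (N h) (hlamh_pos h) (eh h) hβ0 hsβ (le_min hθ0 hσ) (min_le_right _ _) (min_le_right _ _)
    (min_le_left _ _) (lt_min hσθ (by linarith)) hC₃.le hh.1 (hh.2.trans hh₀.2).le
    (fun θ' σ h0 h1 h2 t ht g hg => hiv θ' σ h0 h1 h2 t ht h hh g hg) hg

/-- Under Assumption (iv), with `2αβ > 1` and `θ` as specified, the
deterministic finite element error bound
`‖(L^{−β} − L_h^{−β}Π_h)g‖ ≤ C h^{min{d(2αβ−1), s}} ‖g‖_θ`. -/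
theorem stmt7
    {H : Type*} [NormedAddCommGroup H] [InnerProductSpace ℝ H] [CompleteSpace H]
    (e : ℕ → H) (he : Orthonormal ℝ e)
    (hbasis : (Submodule.span ℝ (Set.range e)).topologicalClosure = ⊤)
    (lam : ℕ → ℝ) (hlam_pos : ∀ j, 0 < lam j) (hlam_mono : Monotone lam)
    (β : ℝ) (hβ : β ∈ Set.Ioo (0 : ℝ) 1) (α : ℝ) (hα : 0 < α)
    (hαβ : 1 < 2 * α * β) (d : ℕ) (hd : 0 < d)
    (N : ℝ → ℕ) (eh : ℝ → ℕ → H) (lamh : ℝ → ℕ → ℝ)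
    (hlamh_pos : ∀ h j, 0 < lamh h j)
    (heh : ∀ h : ℝ, Orthonormal ℝ (fun j : Fin (N h) => eh h j))
    -- Assumption (iv)
    (h₀ : ℝ) (hh₀ : h₀ ∈ Set.Ioo (0 : ℝ) 1) (s : ℝ) (hsβ : 2 * β < s)
    (C₃ : ℝ) (hC₃ : 0 < C₃)
    (hiv : ∀ θ' σ : ℝ, 0 ≤ θ' → θ' ≤ σ → σ ≤ s → ∀ t : ℝ, 0 < t →
      ∀ h ∈ Set.Ioo (0 : ℝ) h₀, ∀ g : H, memDot lam θ' e g →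
      ‖semiGp lam e t g - semiGph (N h) (lamh h) (eh h) t g‖ ≤
        C₃ * h ^ σ * t ^ ((θ' - σ) / 2) * dotNorm lam θ' e g)
    -- θ as specified, with θ* = d(2αβ−1) − 2β
    (θ : ℝ)
    (hθ₁ : 0 ≤ (d : ℝ) * (2 * α * β - 1) - 2 * β →
      min ((d : ℝ) * (2 * α * β - 1) - 2 * β) (s - 2 * β) < θ)
    (hθ₂ : (d : ℝ) * (2 * α * β - 1) - 2 * β < 0 → θ = 0) :
    ∃ C > (0 : ℝ),
      ∀ g : H, memDot lam θ e g →
      ∀ h ∈ Set.Ioo (0 : ℝ) h₀,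
        ‖fracPow lam β e g - fracPowh (N h) (lamh h) β (eh h) g‖ ≤
          C * h ^ min ((d : ℝ) * (2 * α * β - 1)) s * dotNorm lam θ e g :=
  stmt7_general e he lam hlam_pos hlam_mono β hβ α hαβ d N eh lamh hlamh_pos h₀ hh₀ s hsβ C₃ hC₃ hiv
    θ hθ₁ hθ₂
end
end

section
/- Let Assumptions (i)–(iii) hold, let p ≥ 2 be an integer, t ∈ [0,1] and g ∈ H, and set Ỹ_t := Q_{h,k}^β Π_h g + √t · Σ_{j=1}^{N_h} ξ_j Q_{h,k}^β e_{j,h} (which has the distribution of the value at time t of the process Ỹ solving dỸ(t) = Q_{h,k}^β P_h^β dW^β(t), Ỹ(0) = Q_{h,k}^β Π_h g). Then there exist constants C > 0, h₁ ∈ (0,h₀] and k₀ > 0, with C independent of h, k, t and g, such that for all h ∈ (0,h₁) and k ∈ (0,k₀): E[‖Ỹ_t‖^p] ≤ C (1 + e^{−pπ²/(2k)} h^{−pd/2} + ‖g‖^p). -/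
/-!
The sinc-quadrature coefficient of `Q_{h,k}^β` at an eigenvalue `μ` is at most a constant times
`μ^{-β}`, uniformly in `k ≤ 1`: with `x = 2ℓk + log μ` the `ℓ`-th term is
`μ^{-β} e^{βx} / (1 + e^x) ≤ μ^{-β} e^{-min(β, 1-β)|x|}`, and the nodes `x` are `2k` apart, so the
quadrature sum is dominated by a geometric series of size `O(1/k)`, which the prefactor `2k`
cancels. As `λ_{j,h} ≥ λ_j ≥ c_λ (j+1)^α` and `2αβ > 1`, the squared coefficients `c_j²` are
summable uniformly in `h`. Finally `‖Ỹ_t‖ ≤ D‖g‖ + (∑ c_j² ξ_j²)^{1/2}` pointwise, and Hölder's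
inequality with weights `c_j²` bounds `E (∑ c_j² ξ_j²)^{p/2}` by `(∑ c_j²)^{p/2} E|ξ|^p`.
-/

noncomputable section
open MeasureTheory ProbabilityTheory Real Filter
open scoped InnerProductSpace RealInnerProductSpace NNReal

variable {H : Type*} [NormedAddCommGroup H] [InnerProductSpace ℝ H]

lemma exp_mul_div_one_add_exp_le (β x : ℝ) :
    exp (β * x) / (1 + exp x) ≤ exp (-(min β (1 - β) * |x|)) := by
  rcases le_total 0 x with hx | hx
  · calc exp (β * x) / (1 + exp x) ≤ exp (β * x) / exp x := by
          gcongr; linarith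
      _ = exp (-((1 - β) * x)) := by rw [← exp_sub]; ring_nf
      _ ≤ exp (-(min β (1 - β) * |x|)) := by
          rw [abs_of_nonneg hx]
          gcongr
          exact min_le_right _ _
  · calc exp (β * x) / (1 + exp x) ≤ exp (β * x) / 1 := by
          gcongr; linarith [exp_pos x]
      _ = exp (-(β * -x)) := by ring_nf
      _ ≤ exp (-(min β (1 - β) * |x|)) := by
          rw [abs_of_nonpos hx]
          gcongr
          · linarith
          · exact min_le_left _ _

lemma sum_exp_neg_mul_le_of_nonneg {c u : ℝ} (hc : 0 < c) (S : Finset ℤ)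
    (hS : ∀ ℓ ∈ S, 0 ≤ ℓ + u) :
    ∑ ℓ ∈ S, exp (-(c * (ℓ + u))) ≤ (1 - exp (-c))⁻¹ := by
  have hρ0 : 0 ≤ exp (-c) := (exp_pos _).le
  have hρ1 : exp (-c) < 1 := exp_lt_one_iff.mpr (by linarith)
  -- index the terms by their distance `(ℓ - ⌈-u⌉).toNat` to the first admissible integer
  set m : ℤ → ℕ := fun ℓ => (ℓ - ⌈-u⌉).toNat
  have hm : ∀ ℓ ∈ S, (m ℓ : ℤ) = ℓ - ⌈-u⌉ := fun ℓ hℓ =>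
    Int.toNat_of_nonneg (sub_nonneg.mpr (Int.ceil_le.mpr (by linarith [hS ℓ hℓ])))
  calc ∑ ℓ ∈ S, exp (-(c * (ℓ + u))) ≤ ∑ ℓ ∈ S, exp (-c) ^ m ℓ := by
        refine Finset.sum_le_sum fun ℓ hℓ => ?_
        have hmℓ : (m ℓ : ℝ) = ℓ - ⌈-u⌉ := by exact_mod_cast hm ℓ hℓ
        rw [← exp_nat_mul, hmℓ]
        gcongr
        nlinarith [Int.le_ceil (-u)]
    _ = ∑ n ∈ S.image m, exp (-c) ^ n :=
        (Finset.sum_image fun x hx y hy hxy => by linarith [hm x hx, hm y hy]).symm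
    _ ≤ ∑' n, exp (-c) ^ n :=
        Summable.sum_le_tsum _ (fun n _ => pow_nonneg hρ0 n) (summable_geometric_of_lt_one hρ0 hρ1)
    _ = (1 - exp (-c))⁻¹ := tsum_geometric_of_lt_one hρ0 hρ1

lemma sum_exp_neg_mul_abs_le {c : ℝ} (hc : 0 < c) (u : ℝ) (S : Finset ℤ) :
    ∑ ℓ ∈ S, exp (-(c * |ℓ + u|)) ≤ 2 * (1 - exp (-c))⁻¹ := by
  rw [← Finset.sum_filter_add_sum_filter_not S (fun ℓ : ℤ => 0 ≤ (ℓ : ℝ) + u), two_mul]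
  gcongr ?_ + ?_
  · rw [Finset.sum_congr rfl fun ℓ hℓ => by rw [abs_of_nonneg (Finset.mem_filter.mp hℓ).2]]
    exact sum_exp_neg_mul_le_of_nonneg hc _ fun ℓ hℓ => (Finset.mem_filter.mp hℓ).2
  · set R := S.filter (fun ℓ : ℤ => ¬0 ≤ (ℓ : ℝ) + u)
    have hR : ∀ ℓ ∈ R, (ℓ : ℝ) + u < 0 := fun ℓ hℓ => not_le.mp (Finset.mem_filter.mp hℓ).2
    calc ∑ ℓ ∈ R, exp (-(c * |ℓ + u|))
        = ∑ ℓ ∈ R.map (Equiv.neg ℤ).toEmbedding, exp (-(c * (ℓ + -u))) := by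
          rw [Finset.sum_map]
          refine Finset.sum_congr rfl fun ℓ hℓ => ?_
          rw [abs_of_neg (hR ℓ hℓ)]
          simp only [Equiv.toEmbedding_apply, Equiv.neg_apply, Int.cast_neg]
          ring_nf
      _ ≤ (1 - exp (-c))⁻¹ := by
          refine sum_exp_neg_mul_le_of_nonneg hc _ fun ℓ hℓ => ?_
          obtain ⟨ℓ', hℓ', rfl⟩ := Finset.mem_map.mp hℓ
          simp only [Equiv.toEmbedding_apply, Equiv.neg_apply, Int.cast_neg]
          linarith [hR ℓ' hℓ']

lemma one_sub_exp_neg_inv_le {c : ℝ} (hc : 0 < c) : (1 - exp (-c))⁻¹ ≤ 1 + c⁻¹ := by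
  have hexp : 1 + c ≤ exp c := by linarith [add_one_le_exp c]
  have hpos : 0 < 1 - exp (-c) := by
    rw [sub_pos, exp_lt_one_iff]; linarith
  rw [inv_le_iff_one_le_mul₀ hpos, exp_neg]
  field_simp
  nlinarith [exp_pos c]

lemma sqrt_sum_mul_sq_pow_le {ι : Type*} (s : Finset ι) {w : ι → ℝ} (hw : ∀ i, 0 ≤ w i)
    (y : ι → ℝ) {p : ℕ} (hp : 2 ≤ p) :
    √(∑ i ∈ s, w i * y i ^ 2) ^ p ≤
      (∑ i ∈ s, w i) ^ ((p : ℝ) / 2 - 1) * ∑ i ∈ s, w i * |y i| ^ p := by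
  have hq : 1 ≤ (p : ℝ) / 2 := by rw [le_div_iff₀ two_pos]; exact_mod_cast hp
  have hZ : 0 ≤ ∑ i ∈ s, w i * y i ^ 2 := Finset.sum_nonneg fun i _ => by have := hw i; positivity
  have hpow : ∀ i, (y i ^ 2) ^ ((p : ℝ) / 2) = |y i| ^ p := fun i => by
    rw [← sq_abs, ← rpow_natCast, ← rpow_mul (abs_nonneg _), ← rpow_natCast]
    congr 1; push_cast; ring
  have holder := inner_le_weight_mul_Lp_of_nonneg s hq w (fun i => y i ^ 2) hw fun i => sq_nonneg _
  simp only [hpow] at holder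
  have hW : 0 ≤ ∑ i ∈ s, w i := Finset.sum_nonneg fun i _ => hw i
  have hV : 0 ≤ ∑ i ∈ s, w i * |y i| ^ p := Finset.sum_nonneg fun i _ => by have := hw i; positivity
  calc √(∑ i ∈ s, w i * y i ^ 2) ^ p = (∑ i ∈ s, w i * y i ^ 2) ^ ((p : ℝ) / 2) := by
        rw [sqrt_eq_rpow, ← rpow_natCast, ← rpow_mul hZ]; ring_nf
    _ ≤ ((∑ i ∈ s, w i) ^ (1 - ((p : ℝ) / 2)⁻¹) *
          (∑ i ∈ s, w i * |y i| ^ p) ^ ((p : ℝ) / 2)⁻¹) ^ ((p : ℝ) / 2) := by gcongr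
    _ = (∑ i ∈ s, w i) ^ ((p : ℝ) / 2 - 1) * ∑ i ∈ s, w i * |y i| ^ p := by
        rw [mul_rpow (by positivity) (by positivity), ← rpow_mul hW, ← rpow_mul hV,
          inv_mul_cancel₀ (by positivity), rpow_one]
        congr 2
        field_simp

lemma sum_range_sq_le_of_abs_le_rpow {n : ℕ} {c : ℕ → ℝ} {D a : ℝ} (ha : 1 < 2 * a)
    (hc : ∀ j < n, |c j| ≤ D * ((j : ℝ) + 1) ^ (-a)) :
    ∑ j ∈ Finset.range n, c j ^ 2 ≤ D ^ 2 * ∑' j : ℕ, ((j : ℝ) + 1) ^ (-(2 * a)) := by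
  have hsummable : Summable fun j : ℕ => ((j : ℝ) + 1) ^ (-(2 * a)) := by
    refine ((Real.summable_one_div_nat_add_rpow 1 (2 * a)).mpr ha).congr fun j => ?_
    rw [abs_of_pos (by positivity), rpow_neg (by positivity), one_div]
  calc ∑ j ∈ Finset.range n, c j ^ 2
      ≤ ∑ j ∈ Finset.range n, D ^ 2 * ((j : ℝ) + 1) ^ (-(2 * a)) := by
        refine Finset.sum_le_sum fun j hj => ?_
        rw [← sq_abs, show -(2 * a) = -a * 2 by ring, rpow_mul (by positivity), rpow_two, ← mul_pow]
        exact pow_le_pow_left₀ (abs_nonneg _) (hc j (Finset.mem_range.mp hj)) 2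
    _ ≤ D ^ 2 * ∑' j : ℕ, ((j : ℝ) + 1) ^ (-(2 * a)) := by
        rw [← Finset.mul_sum]
        gcongr
        exact hsummable.sum_le_tsum _ fun j _ => by positivity

section Quadrature

variable {β k μ : ℝ}

lemma quadCoeff_nonneg (hβ0 : 0 < β) (hβ1 : β < 1) (hk : 0 < k) (hμ : 0 ≤ μ) :
    0 ≤ quadCoeff β k μ := by
  have hsin : 0 < sin (π * β) := sin_pos_of_pos_of_lt_pi (by positivity) (by nlinarith [pi_pos])
  unfold quadCoeff
  have := pi_pos
  exact mul_nonneg (by positivity) (Finset.sum_nonneg fun ℓ _ => by positivity)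

lemma exp_div_one_add_exp_mul_eq (hμ : 0 < μ) (ℓ : ℝ) :
    exp (2 * β * ℓ * k) / (1 + exp (2 * ℓ * k) * μ) =
      μ ^ (-β) * (exp (β * (2 * ℓ * k + log μ)) / (1 + exp (2 * ℓ * k + log μ))) := by
  rw [rpow_def_of_pos hμ, exp_add, exp_log hμ, mul_div_assoc', ← exp_add]
  ring_nf

lemma quadCoeff_le (hβ0 : 0 < β) (hβ1 : β < 1) (hk : 0 < k) (hμ : 0 < μ) :
    quadCoeff β k μ ≤ (4 * k + 2 / min β (1 - β)) / π * μ ^ (-β) := by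
  set γ := min β (1 - β) with hγ_def
  have hγ : 0 < γ := lt_min hβ0 (by linarith)
  have := pi_pos
  have hterm : ∀ ℓ : ℤ, exp (2 * β * ℓ * k) / (1 + exp (2 * ℓ * k) * μ) ≤
      μ ^ (-β) * exp (-(2 * γ * k * |ℓ + log μ / (2 * k)|)) := by
    intro ℓ
    rw [exp_div_one_add_exp_mul_eq hμ, hγ_def]
    refine mul_le_mul_of_nonneg_left ((exp_mul_div_one_add_exp_le _ _).trans ?_) (by positivity)
    rw [show 2 * (ℓ : ℝ) * k + log μ = 2 * k * (ℓ + log μ / (2 * k)) by field_simp,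
      abs_mul, abs_of_pos (by positivity : 0 < 2 * k)]
    exact le_of_eq (congrArg exp (by ring))
  have hsum : ∑ ℓ ∈ Finset.Icc (-(Kminus β k : ℤ)) (Kplus β k),
      exp (2 * β * ℓ * k) / (1 + exp (2 * ℓ * k) * μ) ≤ μ ^ (-β) * (2 * (1 + (2 * γ * k)⁻¹)) :=
    calc _ ≤ ∑ ℓ ∈ Finset.Icc (-(Kminus β k : ℤ)) (Kplus β k),
          μ ^ (-β) * exp (-(2 * γ * k * |ℓ + log μ / (2 * k)|)) :=
          Finset.sum_le_sum fun ℓ _ => hterm ℓ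
      _ ≤ μ ^ (-β) * (2 * (1 + (2 * γ * k)⁻¹)) := by
          rw [← Finset.mul_sum]
          gcongr
          exact (sum_exp_neg_mul_abs_le (by positivity) _ _).trans
            (by gcongr; exact one_sub_exp_neg_inv_le (by positivity))
  unfold quadCoeff
  calc 2 * k * sin (π * β) / π * _ ≤ 2 * k * 1 / π * (μ ^ (-β) * (2 * (1 + (2 * γ * k)⁻¹))) := by
        gcongr
        exact sin_le_one _
    _ = (4 * k + 2 / γ) / π * μ ^ (-β) := by field_simp; ring

lemma abs_quadCoeff_le_mul_rpow (hβ0 : 0 < β) (hβ1 : β < 1) (hk0 : 0 < k) (hk1 : k ≤ 1)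
    {c α : ℝ} (hc : 0 < c) {j : ℕ} (hμ : c * ((j : ℝ) + 1) ^ α ≤ μ) :
    |quadCoeff β k μ| ≤ (4 + 2 / min β (1 - β)) / π * c ^ (-β) * ((j : ℝ) + 1) ^ (-(α * β)) := by
  have ha : 0 < c * ((j : ℝ) + 1) ^ α := by positivity
  have hμ0 : 0 < μ := ha.trans_le hμ
  have := pi_pos
  have hγ : 0 < min β (1 - β) := lt_min hβ0 (by linarith)
  rw [abs_of_nonneg (quadCoeff_nonneg hβ0 hβ1 hk0 hμ0.le)]
  calc quadCoeff β k μ ≤ (4 * k + 2 / min β (1 - β)) / π * μ ^ (-β) := quadCoeff_le hβ0 hβ1 hk0 hμ0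
    _ ≤ (4 + 2 / min β (1 - β)) / π * μ ^ (-β) := by gcongr; linarith
    _ ≤ (4 + 2 / min β (1 - β)) / π * (c * ((j : ℝ) + 1) ^ α) ^ (-β) :=
        mul_le_mul_of_nonneg_left (rpow_le_rpow_of_nonpos ha hμ (by linarith)) (by positivity)
    _ = (4 + 2 / min β (1 - β)) / π * c ^ (-β) * ((j : ℝ) + 1) ^ (-(α * β)) := by
        rw [mul_rpow hc.le (by positivity), ← rpow_mul (by positivity), neg_mul_eq_mul_neg,
          mul_assoc]

end Quadrature

section OrthonormalFamily

variable {n : ℕ} {v : ℕ → H}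

lemma norm_sum_range_smul_sq (hv : Orthonormal ℝ (fun j : Fin n => v j)) (b : ℕ → ℝ) :
    ‖∑ j ∈ Finset.range n, b j • v j‖ ^ 2 = ∑ j ∈ Finset.range n, b j ^ 2 := by
  rw [← Fin.sum_univ_eq_sum_range (fun j => b j • v j),
    ← Fin.sum_univ_eq_sum_range (fun j => b j ^ 2),
    ← real_inner_self_eq_norm_sq, hv.inner_sum]
  simp [sq]

lemma norm_sum_range_smul (hv : Orthonormal ℝ (fun j : Fin n => v j)) (b : ℕ → ℝ) :
    ‖∑ j ∈ Finset.range n, b j • v j‖ = √(∑ j ∈ Finset.range n, b j ^ 2) := by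
  rw [← norm_sum_range_smul_sq hv, sqrt_sq (norm_nonneg _)]

lemma norm_sum_range_mul_inner_smul_le (hv : Orthonormal ℝ (fun j : Fin n => v j))
    {c : ℕ → ℝ} {D : ℝ} (hD : 0 ≤ D) (hc : ∀ j < n, |c j| ≤ D) (x : H) :
    ‖∑ j ∈ Finset.range n, (c j * ⟪x, v j⟫) • v j‖ ≤ D * ‖x‖ := by
  have bessel : ∑ j ∈ Finset.range n, ⟪x, v j⟫ ^ 2 ≤ ‖x‖ ^ 2 := by
    rw [← Fin.sum_univ_eq_sum_range (fun j => ⟪x, v j⟫ ^ 2)]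
    simpa [real_inner_comm, sq_abs] using hv.sum_inner_products_le (s := Finset.univ) x
  rw [norm_sum_range_smul hv, sqrt_le_left (by positivity)]
  calc ∑ j ∈ Finset.range n, (c j * ⟪x, v j⟫) ^ 2
      ≤ ∑ j ∈ Finset.range n, D ^ 2 * ⟪x, v j⟫ ^ 2 := by
        refine Finset.sum_le_sum fun j hj => ?_
        rw [mul_pow, ← sq_abs (c j)]
        gcongr
        exact hc j (Finset.mem_range.mp hj)
    _ ≤ (D * ‖x‖) ^ 2 := by rw [← Finset.mul_sum, mul_pow]; gcongr

lemma norm_add_sqrt_smul_sum_le (hv : Orthonormal ℝ (fun j : Fin n => v j))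
    {c : ℕ → ℝ} {D : ℝ} (hD : 0 ≤ D) (hc : ∀ j < n, |c j| ≤ D) {t : ℝ} (ht : t ≤ 1)
    (x : H) (y : ℕ → ℝ) :
    ‖∑ j ∈ Finset.range n, (c j * ⟪x, v j⟫) • v j + √t • ∑ j ∈ Finset.range n, (y j * c j) • v j‖ ≤
      D * ‖x‖ + √(∑ j ∈ Finset.range n, c j ^ 2 * y j ^ 2) := by
  have hnoise : ‖∑ j ∈ Finset.range n, (y j * c j) • v j‖ =
      √(∑ j ∈ Finset.range n, c j ^ 2 * y j ^ 2) := by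
    simp only [norm_sum_range_smul hv, mul_pow, mul_comm]
  refine (norm_add_le _ _).trans (add_le_add (norm_sum_range_mul_inner_smul_le hv hD hc x) ?_)
  rw [norm_smul, norm_of_nonneg (sqrt_nonneg t), hnoise]
  exact mul_le_of_le_one_left (sqrt_nonneg _) (sqrt_le_one.mpr ht)

end OrthonormalFamily

lemma integrable_abs_pow_gaussianReal (p : ℕ) :
    Integrable (fun y => |y| ^ p) (gaussianReal 0 1) := by
  simpa using (memLp_id_gaussianReal' (μ := 0) (v := 1) p (by simp)).integrable_norm_pow'

lemma integral_norm_add_sqrt_smul_sum_pow_le {Ω : Type*} [MeasurableSpace Ω] (P : Measure Ω)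
    [IsProbabilityMeasure P] {μ : Measure ℝ} {ξ : ℕ → Ω → ℝ} (hξ : ∀ j, Measurable (ξ j))
    (hlaw : ∀ j, P.map (ξ j) = μ) {p : ℕ} (hp : 2 ≤ p) (hμ : Integrable (fun y => |y| ^ p) μ)
    {n : ℕ} {v : ℕ → H} (hv : Orthonormal ℝ (fun j : Fin n => v j))
    {c : ℕ → ℝ} {D : ℝ} (hD : 0 ≤ D) (hc : ∀ j < n, |c j| ≤ D) {t : ℝ} (ht : t ≤ 1) (x : H) :
    ∫ ω, ‖∑ j ∈ Finset.range n, (c j * ⟪x, v j⟫) • v j +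
        √t • ∑ j ∈ Finset.range n, (ξ j ω * c j) • v j‖ ^ p ∂P ≤
      2 ^ (p - 1) * ((D * ‖x‖) ^ p +
        (∑ j ∈ Finset.range n, c j ^ 2) ^ ((p : ℝ) / 2) * ∫ y, |y| ^ p ∂μ) := by
  have hint : ∀ j, Integrable (fun ω => |ξ j ω| ^ p) P := fun j =>
    (integrable_map_measure (g := fun y : ℝ => |y| ^ p) (by rw [hlaw j]; fun_prop)
      (hξ j).aemeasurable).mp (by rw [hlaw j]; exact hμ)
  have hmoment : ∀ j, ∫ ω, |ξ j ω| ^ p ∂P = ∫ y, |y| ^ p ∂μ := fun j => by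
    rw [← hlaw j, integral_map (hξ j).aemeasurable (by rw [hlaw j]; fun_prop)]
  set W := ∑ j ∈ Finset.range n, c j ^ 2
  set m := ∫ y, |y| ^ p ∂μ
  set bound : Ω → ℝ := fun ω => 2 ^ (p - 1) * ((D * ‖x‖) ^ p +
    W ^ ((p : ℝ) / 2 - 1) * ∑ j ∈ Finset.range n, c j ^ 2 * |ξ j ω| ^ p)
  have hbound : ∀ ω, ‖∑ j ∈ Finset.range n, (c j * ⟪x, v j⟫) • v j +
      √t • ∑ j ∈ Finset.range n, (ξ j ω * c j) • v j‖ ^ p ≤ bound ω := fun ω =>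
    calc _ ≤ (D * ‖x‖ + √(∑ j ∈ Finset.range n, c j ^ 2 * ξ j ω ^ 2)) ^ p :=
          pow_le_pow_left₀ (norm_nonneg _) (norm_add_sqrt_smul_sum_le hv hD hc ht x _) p
      _ ≤ 2 ^ (p - 1) * ((D * ‖x‖) ^ p + √(∑ j ∈ Finset.range n, c j ^ 2 * ξ j ω ^ 2) ^ p) :=
          add_pow_le (by positivity) (sqrt_nonneg _) p
      _ ≤ bound ω := by
          simp only [bound]
          gcongr
          exact sqrt_sum_mul_sq_pow_le _ (fun j => sq_nonneg (c j)) _ hp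
  have hbound_int : Integrable bound P :=
    ((integrable_const _).add ((integrable_finsetSum _ fun j _ =>
      (hint j).const_mul _).const_mul _)).const_mul _
  calc _ ≤ ∫ ω, bound ω ∂P :=
        integral_mono_of_nonneg (ae_of_all _ fun ω => by positivity) hbound_int (ae_of_all _ hbound)
    _ = 2 ^ (p - 1) * ((D * ‖x‖) ^ p + W ^ ((p : ℝ) / 2 - 1) * (W * m)) := by
        simp only [bound]
        rw [integral_const_mul, integral_add (integrable_const _) (((integrable_finsetSum _
          fun j _ => (hint j).const_mul _).const_mul _)), integral_const_mul,
          integral_finsetSum _ fun j _ => (hint j).const_mul _]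
        simp only [integral_const_mul, hmoment, integral_const, probReal_univ, one_smul,
          ← Finset.sum_mul]
        rfl
    _ = 2 ^ (p - 1) * ((D * ‖x‖) ^ p + W ^ ((p : ℝ) / 2) * m) := by
        rw [← mul_assoc, ← rpow_add_one' (Finset.sum_nonneg fun j _ => sq_nonneg (c j))]
        · rw [sub_add_cancel]
        · have : (2 : ℝ) ≤ p := by exact_mod_cast hp
          linarith

theorem stmt14_general
    {H : Type*} [NormedAddCommGroup H] [InnerProductSpace ℝ H]
    {Ω : Type*} [MeasurableSpace Ω] (P : Measure Ω) [IsProbabilityMeasure P]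
    (e : ℕ → H)
    (lam : ℕ → ℝ)
    (β : ℝ) (hβ : β ∈ Set.Ioo (0 : ℝ) 1)
    (N : ℝ → ℕ) (eh : ℝ → ℕ → H) (lamh : ℝ → ℕ → ℝ)
    (heh : ∀ h : ℝ, Orthonormal ℝ (fun j : Fin (N h) => eh h j))
    -- Assumption (i)
    (d : ℕ)
    -- Assumption (ii)
    (C₁ C₂ h₀ : ℝ) (hh₀ : h₀ ∈ Set.Ioo (0 : ℝ) 1)
    (r s q : ℝ)
    (hii : ∀ h ∈ Set.Ioo (0 : ℝ) h₀, ∀ j < N h,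
      lam j ≤ lamh h j ∧ lamh h j ≤ lam j + C₁ * h ^ r * lam j ^ q ∧
      ‖e j - eh h j‖ ^ 2 ≤ C₂ * h ^ (2 * s) * lam j ^ q)
    -- Assumption (iii)
    (clam Clam α : ℝ) (hclam : 0 < clam)
    (hα₁ : 1 / (2 * β) < α)
    (hiii : ∀ j : ℕ, clam * (j + 1 : ℝ) ^ α ≤ lam j ∧ lam j ≤ Clam * (j + 1 : ℝ) ^ α)
    -- noise
    (ξ : ℕ → Ω → ℝ) (hξmeas : ∀ j, Measurable (ξ j))
    (hξgauss : ∀ j, Measure.map (ξ j) P = gaussianReal 0 1)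
    (p : ℕ) (hp : 2 ≤ p) :
    ∃ C > (0 : ℝ), ∃ h₁ > (0 : ℝ), h₁ ≤ h₀ ∧ ∃ k₀ > (0 : ℝ),
      ∀ t ∈ Set.Icc (0 : ℝ) 1, ∀ g : H,
      ∀ h : ℝ, 0 < h → h < h₁ → ∀ k : ℝ, 0 < k → k < k₀ →
        (∫ ω, ‖quadOp (N h) (lamh h) β k (eh h) g + Real.sqrt t •
            ∑ j ∈ Finset.range (N h), (ξ j ω * quadCoeff β k (lamh h j)) • eh h j‖ ^ p ∂P) ≤
          C * (1 + Real.exp (-(p : ℝ) * π ^ 2 / (2 * k)) * h ^ (-((p : ℝ) * d) / 2)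
            + ‖g‖ ^ p) := by
  obtain ⟨hβ0, hβ1⟩ := hβ
  have hαβ : 1 < 2 * (α * β) := by
    rw [div_lt_iff₀ (by positivity)] at hα₁; linarith
  set D := (4 + 2 / min β (1 - β)) / π * clam ^ (-β)
  have hD : 0 < D := by have := pi_pos; have := lt_min hβ0 (sub_pos.mpr hβ1); positivity
  set A := D ^ 2 * ∑' j : ℕ, ((j : ℝ) + 1) ^ (-(2 * (α * β)))
  have hm : 0 ≤ stdMoment p := integral_nonneg fun _ => by positivity
  set C := 2 ^ (p - 1) * (D ^ p + A ^ ((p : ℝ) / 2) * stdMoment p) with hC_def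
  refine ⟨C, by positivity, h₀, hh₀.1, le_rfl, 1, one_pos, fun t ht g h hh0 hh1 k hk0 hk1 => ?_⟩
  have hcoef : ∀ j < N h, |quadCoeff β k (lamh h j)| ≤ D * ((j : ℝ) + 1) ^ (-(α * β)) :=
    fun j hj => abs_quadCoeff_le_mul_rpow hβ0 hβ1 hk0 hk1.le hclam
      ((hiii j).1.trans (hii h ⟨hh0, hh1⟩ j hj).1)
  have hcoef_le : ∀ j < N h, |quadCoeff β k (lamh h j)| ≤ D := fun j hj =>
    (hcoef j hj).trans (mul_le_of_le_one_right hD.le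
      (rpow_le_one_of_one_le_of_nonpos (by linarith [j.cast_nonneg (α := ℝ)]) (by nlinarith)))
  calc _ ≤ 2 ^ (p - 1) * ((D * ‖g‖) ^ p +
          (∑ j ∈ Finset.range (N h), quadCoeff β k (lamh h j) ^ 2) ^ ((p : ℝ) / 2) * stdMoment p) :=
        integral_norm_add_sqrt_smul_sum_pow_le P hξmeas hξgauss hp
          (integrable_abs_pow_gaussianReal p) (heh h) hD.le hcoef_le ht.2 g
    _ ≤ 2 ^ (p - 1) * ((D * ‖g‖) ^ p + A ^ ((p : ℝ) / 2) * stdMoment p) := by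
        gcongr
        exact sum_range_sq_le_of_abs_le_rpow hαβ hcoef
    _ ≤ C * (1 + exp (-(p : ℝ) * π ^ 2 / (2 * k)) * h ^ (-((p : ℝ) * d) / 2) + ‖g‖ ^ p) := by
        rw [hC_def, mul_pow, mul_assoc]
        gcongr
        have hE : 0 ≤ exp (-(p : ℝ) * π ^ 2 / (2 * k)) * h ^ (-((p : ℝ) * d) / 2) := by positivity
        have hnoise : 0 ≤ A ^ ((p : ℝ) / 2) * stdMoment p := by positivity
        nlinarith [pow_nonneg (norm_nonneg g) p, pow_nonneg hD.le p]

/-- Moment bound for the approximate process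
`Ỹ_t = Q_{h,k}^β Π_h g + √t Σ_j ξ_j Q_{h,k}^β e_{j,h}`:
`E[‖Ỹ_t‖^p] ≤ C(1 + e^{−pπ²/(2k)}h^{−pd/2} + ‖g‖^p)`, under Assumptions (i)–(iii). -/
theorem stmt14
    {H : Type*} [NormedAddCommGroup H] [InnerProductSpace ℝ H] [CompleteSpace H]
    {Ω : Type*} [MeasurableSpace Ω] (P : Measure Ω) [IsProbabilityMeasure P]
    (e : ℕ → H) (he : Orthonormal ℝ e)
    (hbasis : (Submodule.span ℝ (Set.range e)).topologicalClosure = ⊤)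
    (lam : ℕ → ℝ) (hlam_pos : ∀ j, 0 < lam j) (hlam_mono : Monotone lam)
    (β : ℝ) (hβ : β ∈ Set.Ioo (0 : ℝ) 1)
    (N : ℝ → ℕ) (eh : ℝ → ℕ → H) (lamh : ℝ → ℕ → ℝ)
    (hlamh_pos : ∀ h j, 0 < lamh h j)
    (heh : ∀ h : ℝ, Orthonormal ℝ (fun j : Fin (N h) => eh h j))
    -- Assumption (i)
    (d : ℕ) (hd : 0 < d) (cN CN : ℝ) (hcN : 0 < cN) (hcNCN : cN ≤ CN)
    (hN : ∀ h ∈ Set.Ioo (0 : ℝ) 1,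
      cN * h ^ (-(d : ℝ)) ≤ (N h : ℝ) ∧ (N h : ℝ) ≤ CN * h ^ (-(d : ℝ)))
    -- Assumption (ii)
    (C₁ C₂ h₀ : ℝ) (hC₁ : 0 < C₁) (hC₂ : 0 < C₂) (hh₀ : h₀ ∈ Set.Ioo (0 : ℝ) 1)
    (r s q : ℝ) (hr : 0 < r) (hs : 0 < s) (hq : 1 < q)
    (hii : ∀ h ∈ Set.Ioo (0 : ℝ) h₀, ∀ j < N h,
      lam j ≤ lamh h j ∧ lamh h j ≤ lam j + C₁ * h ^ r * lam j ^ q ∧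
      ‖e j - eh h j‖ ^ 2 ≤ C₂ * h ^ (2 * s) * lam j ^ q)
    -- Assumption (iii)
    (clam Clam α : ℝ) (hclam : 0 < clam) (hClam : 0 < Clam)
    (hα₁ : 1 / (2 * β) < α) (hα₂ : α ≤ min (r / ((q - 1) * d)) (2 * s / (q * d)))
    (hiii : ∀ j : ℕ, clam * (j + 1 : ℝ) ^ α ≤ lam j ∧ lam j ≤ Clam * (j + 1 : ℝ) ^ α)
    -- noise
    (ξ : ℕ → Ω → ℝ) (hξmeas : ∀ j, Measurable (ξ j))
    (hξindep : iIndepFun ξ P)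
    (hξgauss : ∀ j, Measure.map (ξ j) P = gaussianReal 0 1)
    (p : ℕ) (hp : 2 ≤ p) :
    ∃ C > (0 : ℝ), ∃ h₁ > (0 : ℝ), h₁ ≤ h₀ ∧ ∃ k₀ > (0 : ℝ),
      ∀ t ∈ Set.Icc (0 : ℝ) 1, ∀ g : H,
      ∀ h : ℝ, 0 < h → h < h₁ → ∀ k : ℝ, 0 < k → k < k₀ →
        (∫ ω, ‖quadOp (N h) (lamh h) β k (eh h) g + Real.sqrt t •
            ∑ j ∈ Finset.range (N h), (ξ j ω * quadCoeff β k (lamh h j)) • eh h j‖ ^ p ∂P) ≤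
          C * (1 + Real.exp (-(p : ℝ) * π ^ 2 / (2 * k)) * h ^ (-((p : ℝ) * d) / 2)
            + ‖g‖ ^ p) :=
  stmt14_general P e lam β hβ N eh lamh heh d C₁ C₂ h₀ hh₀ r s q hii clam Clam α hclam hα₁ hiii ξ
    hξmeas hξgauss p hp
end
end

section
/- Suppose Assumption (ii) holds and β ∈ (0,1). Then for all h ∈ (0,h₀) and all 1 ≤ j ≤ N_h: ‖λ_{j,h}^{−β} e_{j,h} − λ_j^{−β} e_j‖ ≤ max{β C₁, √C₂} (h^r λ_j^{q−β−1} + h^s λ_j^{q/2−β}). -/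
noncomputable section
open MeasureTheory ProbabilityTheory Real Filter
open scoped InnerProductSpace RealInnerProductSpace NNReal

variable {H : Type*} [NormedAddCommGroup H] [InnerProductSpace ℝ H]

/-!
Write `λ_{j,h}^{-β} e_{j,h} - λ_j^{-β} e_j = (λ_{j,h}^{-β} - λ_j^{-β}) e_{j,h} + λ_j^{-β} (e_{j,h} - e_j)`.
By the mean value theorem, `x ↦ x^{-β}` lies above its tangent at `λ_j`, so the first coefficient is
at most `β λ_j^{-β-1} (λ_{j,h} - λ_j) ≤ β C₁ h^r λ_j^{q-β-1}`; the second term is controlled by the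
eigenvector estimate of Assumption (ii).
-/

theorem Real.rpow_neg_sub_rpow_neg_le {a b β : ℝ} (ha : 0 < a) (hab : a ≤ b) (hβ : 0 ≤ β) :
    a ^ (-β) - b ^ (-β) ≤ β * a ^ (-β - 1) * (b - a) := by
  rcases hab.eq_or_lt with rfl | hab
  · simp
  obtain ⟨c, ⟨hac, -⟩, hc⟩ := exists_hasDerivAt_eq_slope (fun x : ℝ => x ^ (-β))
    (fun x => -β * x ^ (-β - 1)) hab
    (continuousOn_id.rpow_const fun x hx => Or.inl (ha.trans_le hx.1).ne')
    (fun x hx => by simpa using hasDerivAt_rpow_const (p := -β) (Or.inl (ha.trans hx.1).ne'))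
  have hmvt : a ^ (-β) - b ^ (-β) = β * c ^ (-β - 1) * (b - a) := by
    rw [eq_div_iff (sub_ne_zero.2 hab.ne')] at hc
    linarith
  rw [hmvt]
  have hpow : c ^ (-β - 1) ≤ a ^ (-β - 1) := rpow_le_rpow_of_nonpos ha hac.le (by linarith)
  exact mul_le_mul_of_nonneg_right (mul_le_mul_of_nonneg_left hpow hβ) (sub_nonneg.2 hab.le)

theorem norm_smul_sub_smul_le {𝕜 E : Type*} [NormedField 𝕜] [SeminormedAddCommGroup E]
    [NormedSpace 𝕜 E] (c d : 𝕜) (u v : E) :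
    ‖c • u - d • v‖ ≤ ‖c - d‖ * ‖u‖ + ‖d‖ * ‖u - v‖ := by
  calc ‖c • u - d • v‖ = ‖(c - d) • u + d • (u - v)‖ := by
        rw [sub_smul, smul_sub]; abel_nf
    _ ≤ ‖c - d‖ * ‖u‖ + ‖d‖ * ‖u - v‖ := by
        refine (norm_add_le _ _).trans ?_
        rw [norm_smul, norm_smul]

theorem Real.le_sqrt_mul_rpow_of_sq_le {x C h a s q : ℝ} (hx : 0 ≤ x) (hh : 0 ≤ h) (ha : 0 ≤ a)
    (hsq : x ^ 2 ≤ C * h ^ (2 * s) * a ^ q) : x ≤ √C * h ^ s * a ^ (q / 2) := by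
  have hsplit : C * h ^ (2 * s) * a ^ q = C * (h ^ s * a ^ (q / 2)) ^ 2 := by
    rw [mul_pow, ← rpow_mul_natCast hh, ← rpow_mul_natCast ha]
    push_cast
    ring_nf
  rw [hsplit] at hsq
  calc x = √(x ^ 2) := (sqrt_sq hx).symm
    _ ≤ √(C * (h ^ s * a ^ (q / 2)) ^ 2) := sqrt_le_sqrt hsq
    _ = √C * h ^ s * a ^ (q / 2) := by
        rw [sqrt_mul' _ (by positivity), sqrt_sq (by positivity), mul_assoc]

theorem stmt15_general
    {H : Type*} [NormedAddCommGroup H] [InnerProductSpace ℝ H]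
    (e : ℕ → H)
    (lam : ℕ → ℝ) (hlam_pos : ∀ j, 0 < lam j)
    (β : ℝ) (hβ : β ∈ Set.Ioo (0 : ℝ) 1)
    (N : ℝ → ℕ) (eh : ℝ → ℕ → H) (lamh : ℝ → ℕ → ℝ)
    (heh : ∀ h : ℝ, Orthonormal ℝ (fun j : Fin (N h) => eh h j))
    -- Assumption (ii)
    (C₁ C₂ h₀ : ℝ)
    (r s q : ℝ)
    (hii : ∀ h ∈ Set.Ioo (0 : ℝ) h₀, ∀ j < N h,
      lam j ≤ lamh h j ∧ lamh h j ≤ lam j + C₁ * h ^ r * lam j ^ q ∧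
      ‖e j - eh h j‖ ^ 2 ≤ C₂ * h ^ (2 * s) * lam j ^ q) :
    ∀ h ∈ Set.Ioo (0 : ℝ) h₀, ∀ j < N h,
      ‖(lamh h j ^ (-β)) • eh h j - (lam j ^ (-β)) • e j‖ ≤
        max (β * C₁) (Real.sqrt C₂) *
          (h ^ r * lam j ^ (q - β - 1) + h ^ s * lam j ^ (q / 2 - β)) := by
  intro h hh j hj
  obtain ⟨hlam_le, hlamh_le, hdist⟩ := hii h hh j hj
  have hpos := hlam_pos j
  have hh0 : 0 ≤ h := hh.1.le
  have hunit : ‖eh h j‖ = 1 := by simpa using (heh h).1 ⟨j, hj⟩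
  have heigval : |lamh h j ^ (-β) - lam j ^ (-β)| ≤ β * C₁ * (h ^ r * lam j ^ (q - β - 1)) := by
    rw [abs_sub_comm, abs_of_nonneg (sub_nonneg.2 (rpow_le_rpow_of_nonpos hpos hlam_le
      (by linarith [hβ.1])))]
    calc lam j ^ (-β) - lamh h j ^ (-β) ≤ β * lam j ^ (-β - 1) * (C₁ * h ^ r * lam j ^ q) :=
          (rpow_neg_sub_rpow_neg_le hpos hlam_le hβ.1.le).trans
            (mul_le_mul_of_nonneg_left (by linarith) (mul_nonneg hβ.1.le (by positivity)))
      _ = β * C₁ * (h ^ r * lam j ^ (q - β - 1)) := by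
          rw [show q - β - 1 = -β - 1 + q by ring, rpow_add hpos]; ring
  have heigvec : |lam j ^ (-β)| * ‖eh h j - e j‖ ≤ √C₂ * (h ^ s * lam j ^ (q / 2 - β)) := by
    rw [abs_of_pos (rpow_pos_of_pos hpos _), norm_sub_rev]
    calc lam j ^ (-β) * ‖e j - eh h j‖ ≤ lam j ^ (-β) * (√C₂ * h ^ s * lam j ^ (q / 2)) := by
          gcongr; exact le_sqrt_mul_rpow_of_sq_le (norm_nonneg _) hh0 hpos.le hdist
      _ = √C₂ * (h ^ s * lam j ^ (q / 2 - β)) := by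
          rw [show q / 2 - β = -β + q / 2 by ring, rpow_add hpos]; ring
  calc _ ≤ |lamh h j ^ (-β) - lam j ^ (-β)| * ‖eh h j‖ + |lam j ^ (-β)| * ‖eh h j - e j‖ :=
        norm_smul_sub_smul_le _ _ _ _
    _ ≤ β * C₁ * (h ^ r * lam j ^ (q - β - 1)) + √C₂ * (h ^ s * lam j ^ (q / 2 - β)) := by
        rw [hunit, mul_one]; exact add_le_add heigval heigvec
    _ ≤ _ := by
        rw [mul_add]
        gcongr
        exacts [le_max_left _ _, le_max_right _ _]

/-- Under Assumption (ii), the spectral error bound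
`‖λ_{j,h}^{−β} e_{j,h} − λ_j^{−β} e_j‖ ≤ max{βC₁, √C₂}(h^r λ_j^{q−β−1} + h^s λ_j^{q/2−β})`. -/
theorem stmt15
    {H : Type*} [NormedAddCommGroup H] [InnerProductSpace ℝ H]
    (e : ℕ → H) (he : Orthonormal ℝ e)
    (hbasis : (Submodule.span ℝ (Set.range e)).topologicalClosure = ⊤)
    (lam : ℕ → ℝ) (hlam_pos : ∀ j, 0 < lam j) (hlam_mono : Monotone lam)
    (β : ℝ) (hβ : β ∈ Set.Ioo (0 : ℝ) 1)
    (N : ℝ → ℕ) (eh : ℝ → ℕ → H) (lamh : ℝ → ℕ → ℝ)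
    (hlamh_pos : ∀ h j, 0 < lamh h j)
    (heh : ∀ h : ℝ, Orthonormal ℝ (fun j : Fin (N h) => eh h j))
    -- Assumption (ii)
    (C₁ C₂ h₀ : ℝ) (hC₁ : 0 < C₁) (hC₂ : 0 < C₂) (hh₀ : h₀ ∈ Set.Ioo (0 : ℝ) 1)
    (r s q : ℝ) (hr : 0 < r) (hs : 0 < s) (hq : 1 < q)
    (hii : ∀ h ∈ Set.Ioo (0 : ℝ) h₀, ∀ j < N h,
      lam j ≤ lamh h j ∧ lamh h j ≤ lam j + C₁ * h ^ r * lam j ^ q ∧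
      ‖e j - eh h j‖ ^ 2 ≤ C₂ * h ^ (2 * s) * lam j ^ q) :
    ∀ h ∈ Set.Ioo (0 : ℝ) h₀, ∀ j < N h,
      ‖(lamh h j ^ (-β)) • eh h j - (lam j ^ (-β)) • e j‖ ≤
        max (β * C₁) (Real.sqrt C₂) *
          (h ^ r * lam j ^ (q - β - 1) + h ^ s * lam j ^ (q / 2 - β)) :=
  stmt15_general e lam hlam_pos β hβ N eh lamh heh C₁ C₂ h₀ r s q hii
end
end
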